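/- For the parabolic bottom b(x) = h₀ (x/a)² with h₀, a > 0, and ω = √(2 g h₀)/a, the Thacker/Sampson solution with water surface η(x,t) = h₀ - B²/(4g) cos(2ωt) - B²/(4g) - (Bx/(2a))√(8h₀/g) cos(ωt) and spatially constant velocity u(t) = B√(2h₀/g)·(ω a)/(2h₀) sin(ωt) satisfies the 1D shallow water equations with source term -g h b_x in the wet region where h = η - b > 0; in particular h_t + (hu)_x = 0 holds. -/

import Mathlib

open Real

lemma poly_hasDerivAt (p q r x : ℝ) :
    HasDerivAt (fun ξ : ℝ => p + q * ξ + r * ξ ^ 2) (q + 2 * r * x) x := by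
  have h1 : HasDerivAt (fun ξ : ℝ => p + q * ξ) (q * 1) x :=
    ((hasDerivAt_id x).const_mul q).const_add p
  have h2 : HasDerivAt (fun ξ : ℝ => r * ξ ^ 2) (r * (2 * x ^ 1)) x := by
    simpa using ((hasDerivAt_pow 2 x).const_mul r)
  have := h1.add h2
  refine this.congr_deriv ?_
  ring

lemma cos_mul_hasDerivAt (c t : ℝ) :
    HasDerivAt (fun τ : ℝ => Real.cos (c * τ)) (-(c * Real.sin (c * t))) t := by
  have h1 : HasDerivAt (fun τ : ℝ => c * τ) c t := by
    simpa using (hasDerivAt_id t).const_mul c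
  have := h1.cos
  convert this using 1
  ring

lemma sin_mul_hasDerivAt (c t : ℝ) :
    HasDerivAt (fun τ : ℝ => Real.sin (c * τ)) (c * Real.cos (c * t)) t := by
  have h1 : HasDerivAt (fun τ : ℝ => c * τ) c t := by
    simpa using (hasDerivAt_id t).const_mul c
  have := h1.sin
  convert this using 1
  ring

set_option maxHeartbeats 2000000 in
/-- The Thacker/Sampson parabolic bowl solution, with spatially constant
velocity `u(t) = B sin(ωt)`, satisfies the 1D shallow water equations with the
bathymetry source term `-g h b_x` on the wet region `h > 0`. -/
theorem parabolic_bowl_exact_solution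
    (g h₀ a B : ℝ) (hg : 0 < g) (hh₀ : 0 < h₀) (ha : 0 < a)
    (ω : ℝ) (hω : ω = Real.sqrt (2 * g * h₀) / a)
    (b : ℝ → ℝ) (hb : ∀ x, b x = h₀ * (x / a) ^ 2)
    (η : ℝ → ℝ → ℝ)
    (hη : ∀ x t, η x t = h₀ - B ^ 2 / (4 * g) * Real.cos (2 * ω * t)
        - B ^ 2 / (4 * g)
        - B * x / (2 * a) * Real.sqrt (8 * h₀ / g) * Real.cos (ω * t))
    (h : ℝ → ℝ → ℝ) (hh : ∀ x t, h x t = η x t - b x)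
    (u : ℝ → ℝ) (hu : ∀ t, u t = B * Real.sin (ω * t)) :
    ∀ x t, 0 < h x t →
      (deriv (fun τ => h x τ) t + deriv (fun ξ => h ξ t * u t) x = 0) ∧
      (deriv (fun τ => h x τ * u τ) t
        + deriv (fun ξ => h ξ t * (u t) ^ 2 + g * (h ξ t) ^ 2 / 2) x
        = -(g * h x t * deriv b x)) := by
  intro x t _
  set s : ℝ := Real.sqrt (8 * h₀ / g) with hsdef
  -- key algebraic identities
  have hωa : ω * a = Real.sqrt (2 * g * h₀) := by
    rw [hω]; field_simp
  have hgs : g * s = 2 * (ω * a) := by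
    rw [hωa, hsdef]
    have h1 : g * Real.sqrt (8 * h₀ / g) = Real.sqrt (g ^ 2 * (8 * h₀ / g)) := by
      rw [Real.sqrt_mul (sq_nonneg g), Real.sqrt_sq hg.le]
    have h2 : g ^ 2 * (8 * h₀ / g) = 2 ^ 2 * (2 * g * h₀) := by
      field_simp; ring
    rw [h1, h2, Real.sqrt_mul (by norm_num : (0:ℝ) ≤ (2:ℝ)^2), Real.sqrt_sq (by norm_num : (0:ℝ) ≤ 2)]
  have hωsa : ω * s * a = 4 * h₀ := by
    have : ω * s * a = Real.sqrt (2 * g * h₀) * s := by rw [← hωa]; ring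
    rw [this, hsdef, ← Real.sqrt_mul (by positivity), show 2 * g * h₀ * (8 * h₀ / g) = (4 * h₀) ^ 2 by field_simp; ring, Real.sqrt_sq (by positivity)]
  have hs2 : s = 2 * ω * a / g := by
    field_simp
    linarith [hgs]
  have hh0 : h₀ = ω * s * a / 4 := by linarith [hωsa]
  -- time derivative of h x ·
  have Dht : HasDerivAt (fun τ => h x τ)
      (B ^ 2 * ω * Real.sin (2 * ω * t) / (2 * g)
        + B * x * s * ω * Real.sin (ω * t) / (2 * a)) t := by
    have hf : (fun τ => h x τ) = fun τ =>
        h₀ - B ^ 2 / (4 * g) * Real.cos (2 * ω * τ) - B ^ 2 / (4 * g)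
          - B * x / (2 * a) * s * Real.cos (ω * τ) - h₀ * (x / a) ^ 2 := by
      funext τ; rw [hh, hη, hb]
    rw [hf]
    have d1 := cos_mul_hasDerivAt (2 * ω) t
    have d2 := cos_mul_hasDerivAt ω t
    have := ((((d1.const_mul (B ^ 2 / (4 * g))).const_sub h₀).sub_const
      (B ^ 2 / (4 * g))).sub (d2.const_mul (B * x / (2 * a) * s))).sub_const
      (h₀ * (x / a) ^ 2)
    refine this.congr_deriv ?_
    field_simp
    ring
  -- spatial derivative of h · t
  have Dhx : HasDerivAt (fun ξ => h ξ t)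
      (-(B * s * Real.cos (ω * t) / (2 * a)) - 2 * h₀ * x / a ^ 2) x := by
    have hf : (fun ξ => h ξ t) = fun ξ =>
        (h₀ - B ^ 2 / (4 * g) * Real.cos (2 * ω * t) - B ^ 2 / (4 * g))
          + (-(B * s * Real.cos (ω * t) / (2 * a))) * ξ + (-(h₀ / a ^ 2)) * ξ ^ 2 := by
      funext ξ; rw [hh, hη, hb]; field_simp; ring
    rw [hf]
    have := poly_hasDerivAt
      (h₀ - B ^ 2 / (4 * g) * Real.cos (2 * ω * t) - B ^ 2 / (4 * g))
      (-(B * s * Real.cos (ω * t) / (2 * a))) (-(h₀ / a ^ 2)) x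
    convert this using 1
    ring
  -- derivative of u
  have Du : HasDerivAt u (B * ω * Real.cos (ω * t)) t := by
    have hf : u = fun τ => B * Real.sin (ω * τ) := funext hu
    rw [hf]
    have := (sin_mul_hasDerivAt ω t).const_mul B
    refine this.congr_deriv ?_
    try ring
  -- derivative of b
  have Db : HasDerivAt b (2 * h₀ * x / a ^ 2) x := by
    have hf : b = fun ξ => (0 : ℝ) + (0 : ℝ) * ξ + (h₀ / a ^ 2) * ξ ^ 2 := by
      funext ξ; rw [hb]; field_simp; ring
    rw [hf]
    have := poly_hasDerivAt 0 0 (h₀ / a ^ 2) x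
    convert this using 1
    ring
  have hxtval : h x t = h₀ - B ^ 2 / (4 * g) * Real.cos (2 * ω * t)
      - B ^ 2 / (4 * g) - B * x / (2 * a) * s * Real.cos (ω * t)
      - h₀ * (x / a) ^ 2 := by rw [hh, hη, hb]
  constructor
  · -- mass conservation
    rw [Dht.deriv, (Dhx.mul_const (u t)).deriv, hu t,
      show (2 : ℝ) * ω * t = 2 * (ω * t) by ring, Real.sin_two_mul, hh0, hs2]
    field_simp
    ring
  · -- momentum balance
    have Dtm : HasDerivAt (fun τ => h x τ * u τ) _ t := Dht.mul Du
    have Dxm : HasDerivAt (fun ξ => h ξ t * (u t) ^ 2 + g * (h ξ t) ^ 2 / 2) _ x := (Dhx.mul_const ((u t) ^ 2)).add (((Dhx.pow 2).const_mul g).div_const 2)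
    rw [Dtm.deriv, Dxm.deriv, Db.deriv, hu t, hxtval,
      show (2 : ℝ) * ω * t = 2 * (ω * t) by ring, Real.sin_two_mul,
      Real.cos_two_mul, hh0, hs2]
    field_simp [hg.ne', ha.ne']
    ring_nf
    simp only [mul_inv_cancel_right₀ hg.ne']
    ring
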